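/- arXiv:1805.10052 — 5 statements merged into one kernel-verified Lean document; each statement's English description precedes it below -/
import Mathlib

section
/- Let α be an endomorphism of an abelian group A and B a subgroup of A with α(B) ⊆ B. Then α is integral if and only if the induced endomorphisms on B and on A/B are both integral. -/
open Polynomial Function

namespace AddMonoid.End

variable {A A' : Type*} [AddCommGroup A] [AddCommGroup A']

theorem semiconj_aeval {f : A →+ A'} {α : AddMonoid.End A} {α' : AddMonoid.End A'}
    (h : Semiconj f α α') (p : ℤ[X]) : Semiconj f (aeval α p) (aeval α' p) := by
  induction p using Polynomial.induction_on with
  | C c => intro a; simp [intCast_apply]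
  | add p q hp hq =>
    intro a
    rw [map_add, map_add]
    exact (f.map_add _ _).trans (congrArg₂ (· + ·) (hp a) (hq a))
  | monomial n c ih =>
    rw [pow_succ, ← mul_assoc, map_mul (aeval α), map_mul (aeval α'), aeval_X, aeval_X,
      coe_mul, coe_mul]
    exact ih.comp_right h

theorem isIntegral_of_semiconj_of_surjective {f : A →+ A'} (hf : Surjective f)
    {α : AddMonoid.End A} {α' : AddMonoid.End A'} (h : Semiconj f α α')
    (hα : IsIntegral ℤ α) : IsIntegral ℤ α' := by
  obtain ⟨p, hp, hpα⟩ := hα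
  refine ⟨p, hp, AddMonoid.End.ext _ fun a' => ?_⟩
  obtain ⟨a, rfl⟩ := hf a'
  rw [← aeval_def] at hpα ⊢
  rw [← semiconj_aeval h p a, hpα, zero_apply, map_zero, zero_apply]

theorem isIntegral_of_semiconj_of_injective {f : A' →+ A} (hf : Injective f)
    {α : AddMonoid.End A} {α' : AddMonoid.End A'} (h : Semiconj f α' α)
    (hα : IsIntegral ℤ α) : IsIntegral ℤ α' := by
  obtain ⟨p, hp, hpα⟩ := hα
  refine ⟨p, hp, AddMonoid.End.ext _ fun a' => hf ?_⟩
  rw [← aeval_def] at hpα ⊢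
  rw [semiconj_aeval h p a', hpα, zero_apply, zero_apply, map_zero]

/-- If `p(β) = 0` and `q(γ) = 0`, then `q(α)` maps `A` into `ker π ≤ range i`, where `p(α)`
vanishes; so `(p * q)(α) = 0`. -/
theorem isIntegral_of_semiconj_of_ker_le_range {B C : Type*} [AddCommGroup B] [AddCommGroup C]
    {i : B →+ A} {π : A →+ C} (hexact : π.ker ≤ i.range)
    {α : AddMonoid.End A} {β : AddMonoid.End B} {γ : AddMonoid.End C}
    (hi : Semiconj i β α) (hπ : Semiconj π α γ)
    (hβ : IsIntegral ℤ β) (hγ : IsIntegral ℤ γ) : IsIntegral ℤ α := by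
  obtain ⟨p, hp, hpβ⟩ := hβ
  obtain ⟨q, hq, hqγ⟩ := hγ
  rw [← aeval_def] at hpβ hqγ
  refine ⟨p * q, hp.mul hq, AddMonoid.End.ext _ fun a => ?_⟩
  obtain ⟨b, hb⟩ : aeval α q a ∈ i.range := hexact <| by
    rw [AddMonoidHom.mem_ker, semiconj_aeval hπ q a, hqγ]; rfl
  rw [← aeval_def, map_mul]
  show aeval α p (aeval α q a) = 0
  rw [← hb, ← semiconj_aeval hi p b, hpβ, zero_apply, map_zero]

end AddMonoid.End

/-- `α` is integral iff the endomorphisms induced on an invariant subgroup `B`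
and on the quotient `A ⧸ B` are both integral. -/
theorem stmt2 {A : Type*} [AddCommGroup A] (α : AddMonoid.End A) (B : AddSubgroup A)
    (hB : ∀ b ∈ B, α b ∈ B) :
    IsIntegral ℤ α ↔
      (IsIntegral ℤ (show AddMonoid.End B from
        AddMonoidHom.codRestrict (AddMonoidHom.domRestrict (α : A →+ A) B) B
          (fun b => hB b b.2)) ∧
       IsIntegral ℤ (show AddMonoid.End (A ⧸ B) from
        QuotientAddGroup.map B B (α : A →+ A) (fun b hb => hB b hb))) := by
  have hi : Semiconj B.subtype (AddMonoidHom.codRestrict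
      (AddMonoidHom.domRestrict (α : A →+ A) B) B (fun b => hB b b.2)) α := fun _ => rfl
  have hπ : Semiconj (QuotientAddGroup.mk' B) α
      (QuotientAddGroup.map B B (α : A →+ A) (fun b hb => hB b hb)) := fun _ => rfl
  have hexact : (QuotientAddGroup.mk' B).ker ≤ B.subtype.range := by
    rw [QuotientAddGroup.ker_mk', AddSubgroup.range_subtype]
  exact ⟨fun hα =>
      ⟨AddMonoid.End.isIntegral_of_semiconj_of_injective B.subtype_injective hi hα,
        AddMonoid.End.isIntegral_of_semiconj_of_surjective (QuotientAddGroup.mk'_surjective B)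
          hπ hα⟩,
    fun ⟨hβ, hγ⟩ => AddMonoid.End.isIntegral_of_semiconj_of_ker_le_range hexact hi hπ hβ hγ⟩
end

section
/- Let G be a group, m an integer, and θ an automorphism of G such that θ(g) ∈ g^m·[G,G] for all g ∈ G (an m-powering automorphism). Then for every i ≥ 1, the automorphism induced by θ on the lower central quotient γ_i(G)/γ_{i+1}(G) is multiplication by m^i. -/
/-!
If `θ` acts as `k`-th powering on `γₙ/γₙ₊₁` and as `l`-th powering on `G/[G,G]`, it acts as
`kl`-th powering on `γₙ₊₁/γₙ₊₂`; induction on `n` then gives the exponent `mⁱ`. Modulo `γₙ₊₂`,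
for `a ∈ γₙ` every commutator `⁅a, x⁆` is central, so `x ↦ ⁅a, x⁆` is a homomorphism to an
abelian group: it kills `[G,G]`, and moreover `⁅aᵏ, x⁆ = ⁅a, x⁆ᵏ`. Writing
`θ a = c aᵏ` with `c ∈ γₙ₊₁` central and `θ b = d bˡ` with `d ∈ [G,G]` gives
`θ ⁅a, b⁆ ≡ ⁅a, b⁆^(kl)`, and the congruence passes from these generators to all of `γₙ₊₁`
because `γₙ₊₁/γₙ₊₂` is central.
-/

open Subgroup

open scoped commutatorElement

section CentralCommutators

variable {Q : Type*} [Group Q]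

theorem commutatorElement_mul_left_of_mem_center {C : Q} (hC : C ∈ center Q) (a b : Q) :
    ⁅C * a, b⁆ = ⁅a, b⁆ := by
  rw [commutatorElement_mul_left_eq_conj_mul,
    commutatorElement_eq_one_iff_commute.mpr (mem_center_iff.mp hC b).symm, mul_one,
    (mem_center_iff.mp hC _).symm, mul_inv_cancel_right]

variable {A : Q}

theorem commutatorElement_mul_right_of_forall_mem_center (hA : ∀ x, ⁅A, x⁆ ∈ center Q)
    (x y : Q) : ⁅A, x * y⁆ = ⁅A, x⁆ * ⁅A, y⁆ := by
  rw [commutatorElement_mul_right_eq_mul_conj, mul_assoc _ x, mem_center_iff.mp (hA y) x,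
    ← mul_assoc, mul_inv_cancel_right]

def centralCommutatorHom (hA : ∀ x, ⁅A, x⁆ ∈ center Q) : Q →* center Q :=
  MonoidHom.mk' (fun x => ⟨⁅A, x⁆, hA x⟩) fun x y =>
    Subtype.ext (commutatorElement_mul_right_of_forall_mem_center hA x y)

theorem commutatorElement_zpow_right_of_forall_mem_center (hA : ∀ x, ⁅A, x⁆ ∈ center Q)
    (x : Q) (k : ℤ) : ⁅A, x ^ k⁆ = ⁅A, x⁆ ^ k := by
  simpa [centralCommutatorHom] using congrArg Subtype.val (map_zpow (centralCommutatorHom hA) x k)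

open scoped IsMulCommutative in
theorem commutatorElement_eq_one_of_mem_commutator (hA : ∀ x, ⁅A, x⁆ ∈ center Q) {x : Q}
    (hx : x ∈ commutator Q) : ⁅A, x⁆ = 1 := by
  simpa [centralCommutatorHom] using
    Abelianization.commutator_subset_ker (centralCommutatorHom hA) hx

theorem commutatorElement_zpow_left_of_forall_mem_center (hA : ∀ x, ⁅A, x⁆ ∈ center Q)
    (k : ℤ) (x : Q) : ⁅A ^ k, x⁆ = ⁅A, x⁆ ^ k := by
  have hcomm : Commute A ⁅A, x⁆⁻¹ := mem_center_iff.mp (inv_mem (hA x)) A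
  have hconj : x * A * x⁻¹ = A * ⁅A, x⁆⁻¹ := by
    rw [hcomm.eq]; simp only [commutatorElement_def]; group
  calc ⁅A ^ k, x⁆ = A ^ k * (x * A * x⁻¹) ^ (-k) := by
        rw [conj_zpow, commutatorElement_def, zpow_neg]; group
    _ = A ^ k * (A ^ (-k) * (⁅A, x⁆⁻¹) ^ (-k)) := by rw [hconj, hcomm.mul_zpow]
    _ = ⁅A, x⁆ ^ k := by rw [zpow_neg A, mul_inv_cancel_left, inv_zpow', neg_neg]

theorem commutatorElement_mul_zpow_mul_zpow (hA : ∀ x, ⁅A, x⁆ ∈ center Q) {C D : Q}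
    (hC : C ∈ center Q) (hD : D ∈ commutator Q) (B : Q) (k l : ℤ) :
    ⁅C * A ^ k, D * B ^ l⁆ = ⁅A, B⁆ ^ (k * l) := by
  have hAk : ∀ x, ⁅A ^ k, x⁆ ∈ center Q := fun x => by
    rw [commutatorElement_zpow_left_of_forall_mem_center hA]
    exact zpow_mem (hA x) k
  rw [commutatorElement_mul_left_of_mem_center hC,
    commutatorElement_mul_right_of_forall_mem_center hAk,
    commutatorElement_eq_one_of_mem_commutator hAk hD, one_mul,
    commutatorElement_zpow_right_of_forall_mem_center hAk,
    commutatorElement_zpow_left_of_forall_mem_center hA, zpow_mul]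

end CentralCommutators

theorem map_eq_zpow_of_mem_closure {G Q : Type*} [Group G] [Group Q] (φ ψ : G →* Q)
    {s : Set G} (k : ℤ) (hψ : ∀ x ∈ closure s, ψ x ∈ center Q)
    (hs : ∀ x ∈ s, φ x = ψ x ^ k) {x : G} (hx : x ∈ closure s) : φ x = ψ x ^ k := by
  induction hx using closure_induction with
  | mem x hx => exact hs x hx
  | one => simp
  | mul x y hx _ ihx ihy =>
    have hxy : Commute (ψ x) (ψ y) := (mem_center_iff.mp (hψ x hx) (ψ y)).symm
    rw [map_mul, map_mul, ihx, ihy, hxy.mul_zpow]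
  | inv x _ ihx => rw [map_inv, map_inv, ihx, inv_zpow]

section LowerCentralSeries

variable {G : Type*} [Group G]

local notation "γ" => Subgroup.lowerCentralSeries (⊤ : Subgroup G)

theorem mk'_mem_center_of_mem_lowerCentralSeries {n : ℕ} {x : G} (hx : x ∈ γ n) :
    QuotientGroup.mk' (γ (n + 1)) x ∈ center (G ⧸ γ (n + 1)) := by
  rw [mem_center_iff]
  intro q
  obtain ⟨y, rfl⟩ := QuotientGroup.mk'_surjective _ q
  refine (commutatorElement_eq_one_iff_mul_comm.mp ?_).symm
  rw [← map_commutatorElement, QuotientGroup.mk'_apply, QuotientGroup.eq_one_iff]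
  exact commutator_mem_commutator hx (mem_top y)

theorem mul_inv_zpow_mem_lowerCentralSeries_succ {θ : G →* G} {k l : ℤ} {n : ℕ}
    (hl : ∀ g, θ g * (g ^ l)⁻¹ ∈ commutator G)
    (hk : ∀ g ∈ γ n, θ g * (g ^ k)⁻¹ ∈ γ (n + 1)) :
    ∀ g ∈ γ (n + 1), θ g * (g ^ (k * l))⁻¹ ∈ γ (n + 2) := by
  set π := QuotientGroup.mk' (γ (n + 2))
  intro g hg
  rw [← div_eq_mul_inv, ← QuotientGroup.eq_iff_div_mem, QuotientGroup.mk_zpow]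
  refine map_eq_zpow_of_mem_closure (π.comp θ) π (k * l)
    (fun x hx => mk'_mem_center_of_mem_lowerCentralSeries hx) ?_ hg
  rintro _ ⟨a, ha, b, -, rfl⟩
  have hA : ∀ y, ⁅π a, y⁆ ∈ center (G ⧸ γ (n + 2)) := by
    intro y
    obtain ⟨y, rfl⟩ := QuotientGroup.mk'_surjective _ y
    rw [← map_commutatorElement]
    exact mk'_mem_center_of_mem_lowerCentralSeries (commutator_mem_commutator ha (mem_top y))
  have hC : π (θ a * (a ^ k)⁻¹) ∈ center (G ⧸ γ (n + 2)) :=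
    mk'_mem_center_of_mem_lowerCentralSeries (hk a ha)
  have hD : π (θ b * (b ^ l)⁻¹) ∈ commutator (G ⧸ γ (n + 2)) :=
    commutator_mono le_top le_top (map_commutator_eq G π ▸ mem_map_of_mem π (hl b))
  have hθa : π (θ a) = π (θ a * (a ^ k)⁻¹) * π a ^ k := by
    rw [map_mul, map_inv, map_zpow, inv_mul_cancel_right]
  have hθb : π (θ b) = π (θ b * (b ^ l)⁻¹) * π b ^ l := by
    rw [map_mul, map_inv, map_zpow, inv_mul_cancel_right]
  rw [MonoidHom.comp_apply, map_commutatorElement, map_commutatorElement, hθa, hθb,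
    commutatorElement_mul_zpow_mul_zpow hA hC hD, map_commutatorElement]

end LowerCentralSeries

/-- Mathlib's `lowerCentralSeries` is indexed from `0`: `lowerCentralSeries i` is `γᵢ₊₁(G)`. -/
theorem stmt5 {G : Type*} [Group G] (m : ℤ) (θ : G ≃* G)
    (hθ : ∀ g : G, θ g * (g ^ m)⁻¹ ∈ commutator G) :
    ∀ i : ℕ, ∀ g ∈ (⊤ : Subgroup G).lowerCentralSeries i,
      θ g * (g ^ (m ^ (i + 1)))⁻¹ ∈ (⊤ : Subgroup G).lowerCentralSeries (i + 1) := by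
  intro i
  induction i with
  | zero => simpa [top_lowerCentralSeries_one, commutator_def] using hθ
  | succ i ih =>
    rw [pow_succ]
    exact mul_inv_zpow_mem_lowerCentralSeries_succ (θ := θ.toMonoidHom) hθ ih
end

section
/- Let N be a torsion-free nilpotent group and let Γ be a subgroup of Aut(N) that acts nilpotently on N (i.e., the semidirect product Γ ⋉ N is nilpotent). Then Γ is torsion-free. -/
/-!
Let `σ ∈ Γ` have finite order `n` and let `γ₀ ≥ γ₁ ≥ … ≥ γ_c = 1` be the lower central series
of `N ⋊ Γ`. By descending induction on `i`, `σ` fixes every `x ∈ N ∩ γᵢ`: the element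
`z = x⁻¹ σ(x)` is a commutator `[x⁻¹, σ]`, hence lies in `γᵢ₊₁` and is fixed by `σ`. Then
`σᵏ(x) = x zᵏ`, so `zⁿ = 1`, and torsion-freeness gives `z = 1`. At `i = 0` this says `σ = 1`.
-/

open SemidirectProduct
open scoped commutatorElement

namespace MulAut

variable {N : Type*} [Group N]

lemma pow_apply_eq_mul_pow {σ : MulAut N} {x z : N} (hx : σ x = x * z) (hz : σ z = z) (k : ℕ) :
    (σ ^ k) x = x * z ^ k := by
  induction k with
  | zero => simp
  | succ k ih => rw [pow_succ', mul_apply, ih, map_mul, map_pow, hz, hx, mul_assoc, ← pow_succ']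

lemma apply_eq_self_of_isOfFinOrder (hN : ∀ z : N, z ≠ 1 → ¬IsOfFinOrder z) {σ : MulAut N}
    (hσ : IsOfFinOrder σ) {x : N} (hfix : σ (x⁻¹ * σ x) = x⁻¹ * σ x) : σ x = x := by
  obtain ⟨n, hn, hσn⟩ := hσ.exists_pow_eq_one
  have hpow := pow_apply_eq_mul_pow (mul_inv_cancel_left x (σ x)).symm hfix n
  rw [hσn, one_apply, left_eq_mul] at hpow
  by_contra hne
  exact hN _ (mt inv_mul_eq_one.mp (Ne.symm hne)) (isOfFinOrder_iff_pow_eq_one.mpr ⟨n, hn, hpow⟩)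

end MulAut

namespace SemidirectProduct

variable {N G : Type*} [Group N] [Group G] {φ : G →* MulAut N}

lemma inl_inv_mul_apply_eq_commutator (x : N) (g : G) :
    (inl (x⁻¹ * φ g x) : N ⋊[φ] G) = ⁅(inl x⁻¹ : N ⋊[φ] G), inr g⁆ := by
  rw [commutatorElement_def, map_mul, inl_aut, map_inv, map_inv, inv_inv]
  simp only [mul_assoc]

lemma inl_inv_mul_apply_mem_lowerCentralSeries_succ {i : ℕ} {x : N}
    (hx : inl x ∈ (⊤ : Subgroup (N ⋊[φ] G)).lowerCentralSeries i) (g : G) :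
    inl (x⁻¹ * φ g x) ∈ (⊤ : Subgroup (N ⋊[φ] G)).lowerCentralSeries (i + 1) := by
  rw [inl_inv_mul_apply_eq_commutator, Subgroup.lowerCentralSeries_succ]
  refine Subgroup.commutator_mem_commutator ?_ (Subgroup.mem_top _)
  simpa using inv_mem hx

lemma apply_eq_self_of_lowerCentralSeries_eq_bot {g : G}
    (hN : ∀ z : N, z ≠ 1 → ¬IsOfFinOrder z) (hg : IsOfFinOrder (φ g)) (d : ℕ) {i : ℕ}
    (hbot : (⊤ : Subgroup (N ⋊[φ] G)).lowerCentralSeries (i + d) = ⊥)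
    {x : N} (hx : inl x ∈ (⊤ : Subgroup (N ⋊[φ] G)).lowerCentralSeries i) : φ g x = x := by
  induction d generalizing i x with
  | zero =>
    rw [add_zero] at hbot
    rw [hbot, Subgroup.mem_bot, map_eq_one_iff _ inl_injective] at hx
    rw [hx, map_one]
  | succ d ih =>
    refine MulAut.apply_eq_self_of_isOfFinOrder hN hg (ih (i := i + 1) ?_ ?_)
    · rwa [add_right_comm, add_assoc]
    · exact inl_inv_mul_apply_mem_lowerCentralSeries_succ hx g

theorem eq_one_of_isOfFinOrder [Group.IsNilpotent (N ⋊[φ] G)] {g : G}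
    (hN : ∀ z : N, z ≠ 1 → ¬IsOfFinOrder z) (hg : IsOfFinOrder (φ g)) : φ g = 1 := by
  obtain ⟨c, hc⟩ := Subgroup.nilpotent_iff_lowerCentralSeries.mp ‹Group.IsNilpotent (N ⋊[φ] G)›
  ext x
  refine apply_eq_self_of_lowerCentralSeries_eq_bot hN hg c (i := 0) (by rwa [zero_add]) ?_
  simp

end SemidirectProduct

theorem stmt8_general {N : Type*} [Group N]
    (htf : ∀ g : N, g ≠ 1 → ¬IsOfFinOrder g) (Γ : Subgroup (MulAut N))
    (hnil : Group.IsNilpotent (SemidirectProduct N ↥Γ Γ.subtype)) :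
    ∀ g : ↥Γ, g ≠ 1 → ¬IsOfFinOrder g := by
  intro g hg hfin
  exact hg (Subtype.ext (eq_one_of_isOfFinOrder htf (Γ.subtype.isOfFinOrder hfin)))

/-- If `N` is a torsion-free nilpotent group and `Γ ≤ Aut N` acts nilpotently on `N`
(i.e. the semidirect product `Γ ⋉ N` is nilpotent), then `Γ` is torsion-free. -/
theorem stmt8 {N : Type*} [Group N] [Group.IsNilpotent N]
    (htf : ∀ g : N, g ≠ 1 → ¬IsOfFinOrder g) (Γ : Subgroup (MulAut N))
    (hnil : Group.IsNilpotent (SemidirectProduct N ↥Γ Γ.subtype)) :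
    ∀ g : ↥Γ, g ≠ 1 → ¬IsOfFinOrder g :=
  stmt8_general htf Γ hnil
end

section
/- Let G be an elementary amenable group with a finite subnormal series 1 = G₀ ◁ G₁ ◁ ⋯ ◁ G_n = G in which every factor G_j/G_{j−1} is either infinite cyclic or locally finite. Let J be the set of indices j with G_j/G_{j−1} infinite cyclic, and for each j ∈ J choose g_j ∈ G_j generating G_j modulo G_{j−1}. Then the subgroup H = ⟨g_j : j ∈ J⟩ is a finitely generated subgroup of G with Hirsch length equal to that of G. -/
/-!
Cutting the series `s` down to `H` keeps every factor: a subgroup of a locally finite factor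
is locally finite, and an infinite cyclic factor is hit entirely because its generator `g i`
lies in `H`. So `H` carries an admissible series with the same number of infinite cyclic
factors, and it remains to see that this number does not depend on the series. For that,
intersect and project a second series along the penultimate term `N` of the first: each of its
factors splits into a factor of the series on `N` and one of the series on `G ⧸ N`, and for an
infinite cyclic or locally finite group the ranks (1 or 0) of a normal subgroup and of its
quotient add up. Induction on the length of the first series finishes the argument.
-/

universe u

/-- A group is locally finite if every finitely generated subgroup is finite. -/
def IsLocallyFiniteGroup (F : Type u) [Group F] : Prop :=
  ∀ T : Subgroup F, T.FG → Finite T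

/-- An infinite cyclic group. -/
def IsInfiniteCyclic (F : Type u) [Group F] : Prop := IsCyclic F ∧ Infinite F

/-- `s` is a finite subnormal series of `G` whose factors are infinite cyclic (when
`c i = true`) or locally finite (when `c i = false`); each factor is presented by a
surjection from `s i.succ` whose kernel is `s i.castSucc`. -/
def IsGoodSeries {G : Type u} [Group G] {n : ℕ} (s : Fin (n + 1) → Subgroup G)
    (c : Fin n → Bool) : Prop :=
  s 0 = ⊥ ∧ s (Fin.last n) = ⊤ ∧
  ∀ i : Fin n, s i.castSucc ≤ s i.succ ∧
    ∃ (F : Type u) (_ : Group F) (f : ↥(s i.succ) →* F),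
      Function.Surjective f ∧
      (∀ x : ↥(s i.succ), f x = 1 ↔ (x : G) ∈ s i.castSucc) ∧
      (if c i then IsInfiniteCyclic F else IsLocallyFiniteGroup F)

/-- The Hirsch length of `G`: the number of infinite cyclic factors in a subnormal
series with infinite cyclic or locally finite factors (`⊤` if no such series exists).
Since this number is independent of the series, the infimum realizes it. -/
noncomputable def hirschLength (G : Type u) [Group G] : ℕ∞ :=
  sInf {m : ℕ∞ | ∃ (n : ℕ) (s : Fin (n + 1) → Subgroup G) (c : Fin n → Bool),
    IsGoodSeries s c ∧ m = ((Finset.univ.filter fun i => c i = true).card : ℕ∞)}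

/-- The class of elementary amenable groups: the smallest class of groups containing all
finite groups and all abelian groups and closed under extensions and directed unions. -/
inductive ElementaryAmenable : ∀ (G : Type u) [Group G], Prop
  | of_finite (G : Type u) [Group G] [Finite G] : ElementaryAmenable G
  | of_abelian (G : Type u) [Group G] (h : ∀ a b : G, a * b = b * a) : ElementaryAmenable G
  | of_extension (G : Type u) [Group G] (N : Subgroup G) [N.Normal]
      (hN : ElementaryAmenable ↥N) (hQ : ElementaryAmenable (G ⧸ N)) :
      ElementaryAmenable G
  | of_directedUnion (G : Type u) [Group G] {ι : Type u} (S : ι → Subgroup G)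
      (hdir : Directed (· ≤ ·) S) (hcover : ∀ g : G, ∃ i, g ∈ S i)
      (h : ∀ i, ElementaryAmenable ↥(S i)) : ElementaryAmenable G

open Subgroup

section LocallyFinite

variable {K L : Type*} [Group K] [Group L]

theorem isLocallyFiniteGroup_iff :
    IsLocallyFiniteGroup K ↔ ∀ S : Set K, S.Finite → (closure S : Set K).Finite := by
  refine ⟨fun h S hS => Set.finite_coe_iff.mp (h _ ((fg_iff _).mpr ⟨S, rfl, hS⟩)), ?_⟩
  intro h T hT
  obtain ⟨S, rfl, hS⟩ := (fg_iff T).mp hT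
  exact Set.finite_coe_iff.mpr (h S hS)

theorem IsLocallyFiniteGroup.of_finite [Finite K] : IsLocallyFiniteGroup K :=
  fun _ _ => Subtype.finite

theorem IsLocallyFiniteGroup.of_injective (hL : IsLocallyFiniteGroup L) (φ : K →* L)
    (hφ : Function.Injective φ) : IsLocallyFiniteGroup K := by
  rw [isLocallyFiniteGroup_iff] at hL ⊢
  intro S hS
  refine Set.Finite.of_finite_image ?_ hφ.injOn
  rw [← coe_map, MonoidHom.map_closure]
  exact hL _ (hS.image φ)

theorem IsLocallyFiniteGroup.of_surjective (hK : IsLocallyFiniteGroup K) (φ : K →* L)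
    (hφ : Function.Surjective φ) : IsLocallyFiniteGroup L := by
  rw [isLocallyFiniteGroup_iff] at hK ⊢
  intro S hS
  have hlift : φ '' (Function.surjInv hφ '' S) = S := by
    rw [Set.image_image]; simp [Function.surjInv_eq hφ]
  rw [← hlift, ← MonoidHom.map_closure, coe_map]
  exact (hK _ (hS.image _)).image φ

theorem IsLocallyFiniteGroup.isOfFinOrder (h : IsLocallyFiniteGroup K) (a : K) :
    IsOfFinOrder a := by
  rw [isLocallyFiniteGroup_iff] at h
  rw [← finite_zpowers, zpowers_eq_closure]
  exact h _ (Set.finite_singleton a)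

end LocallyFinite

namespace IsInfiniteCyclic

variable {F Q : Type*} [Group F] [Group Q]

theorem exists_generator (h : IsInfiniteCyclic F) :
    ∃ g : F, ¬IsOfFinOrder g ∧ ∀ x : F, x ∈ zpowers g := by
  obtain ⟨g, hg⟩ := h.1.exists_generator
  have htop : (zpowers g : Set F) = Set.univ := Set.eq_univ_of_forall hg
  have := h.2
  exact ⟨g, infinite_zpowers.mp (htop ▸ Set.infinite_univ), hg⟩

theorem not_isLocallyFiniteGroup (h : IsInfiniteCyclic F) : ¬IsLocallyFiniteGroup F := by
  obtain ⟨g, hg, -⟩ := h.exists_generator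
  exact fun hF => hg (hF.isOfFinOrder g)

theorem not_isOfFinOrder (h : IsInfiniteCyclic F) {a : F} (ha : a ≠ 1) : ¬IsOfFinOrder a := by
  obtain ⟨g, hg, hgen⟩ := h.exists_generator
  obtain ⟨k, rfl⟩ := hgen a
  have hk : k ≠ 0 := by rintro rfl; exact ha (zpow_zero g)
  intro hfin
  obtain ⟨m, hm, hma⟩ := isOfFinOrder_iff_zpow_eq_one.mp hfin
  exact hg (isOfFinOrder_iff_zpow_eq_one.mpr ⟨k * m, mul_ne_zero hk hm, by rw [zpow_mul, hma]⟩)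

theorem of_mulEquiv (h : IsInfiniteCyclic F) (e : F ≃* Q) : IsInfiniteCyclic Q :=
  have := h.1
  have := h.2
  ⟨isCyclic_of_surjective e e.surjective, Infinite.of_injective e e.injective⟩

theorem subgroup (h : IsInfiniteCyclic F) (A : Subgroup F) (hA : A ≠ ⊥) :
    IsInfiniteCyclic A := by
  have := h.1
  obtain ⟨⟨a, haA⟩, ha⟩ := ne_bot_iff_exists_ne_one.mp hA
  have hzp : (zpowers a : Set F).Infinite :=
    infinite_zpowers.mpr (h.not_isOfFinOrder fun h1 => ha (Subtype.ext h1))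
  exact ⟨inferInstance, (hzp.mono (zpowers_le.mpr haA)).to_subtype⟩

theorem finite_of_surjective (h : IsInfiniteCyclic F) (ψ : F →* Q)
    (hψ : Function.Surjective ψ) (hker : ψ.ker ≠ ⊥) : Finite Q := by
  obtain ⟨g, -, hgen⟩ := h.exists_generator
  obtain ⟨⟨a, ha⟩, ha1⟩ := ne_bot_iff_exists_ne_one.mp hker
  obtain ⟨k, rfl⟩ := hgen a
  have hk : k ≠ 0 := by rintro rfl; exact ha1 (Subtype.ext (zpow_zero g))
  have hfin : IsOfFinOrder (ψ g) :=
    isOfFinOrder_iff_zpow_eq_one.mpr ⟨k, hk, by rw [← map_zpow]; exact ha⟩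
  refine Set.finite_univ_iff.mp ((finite_zpowers.mpr hfin).subset fun x _ => ?_)
  obtain ⟨y, rfl⟩ := hψ x
  obtain ⟨n, rfl⟩ := hgen y
  exact ⟨n, (map_zpow ψ g n).symm⟩

end IsInfiniteCyclic

def IsGoodFactor (F : Type*) [Group F] (b : Bool) : Prop :=
  if b then IsInfiniteCyclic F else IsLocallyFiniteGroup F

section

variable {F : Type*} [Group F]

@[simp]
theorem isGoodFactor_true : IsGoodFactor F true ↔ IsInfiniteCyclic F := Iff.rfl

@[simp]
theorem isGoodFactor_false : IsGoodFactor F false ↔ IsLocallyFiniteGroup F := Iff.rfl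

end

namespace IsGoodFactor

variable {F Q : Type*} [Group F] [Group Q] {b : Bool}

theorem of_subsingleton [Subsingleton F] : IsGoodFactor F false :=
  IsLocallyFiniteGroup.of_finite

theorem eq (h : IsGoodFactor F b) {b' : Bool} (h' : IsGoodFactor F b') : b = b' := by
  cases b <;> cases b' <;> simp only [isGoodFactor_true, isGoodFactor_false] at h h'
  · rfl
  · exact (h'.not_isLocallyFiniteGroup h).elim
  · exact (h.not_isLocallyFiniteGroup h').elim
  · rfl

theorem of_mulEquiv (h : IsGoodFactor F b) (e : F ≃* Q) : IsGoodFactor Q b := by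
  cases b
  · exact IsLocallyFiniteGroup.of_injective h e.symm.toMonoidHom e.symm.injective
  · exact IsInfiniteCyclic.of_mulEquiv h e

theorem subgroup_of_eq_top (h : IsGoodFactor F b) {M : Subgroup F} (hM : M = ⊤) :
    IsGoodFactor M b :=
  h.of_mulEquiv ((MulEquiv.subgroupCongr hM).trans topEquiv).symm

theorem subgroup_false (h : IsGoodFactor F false) (M : Subgroup F) : IsGoodFactor M false :=
  IsLocallyFiniteGroup.of_injective h M.subtype M.subtype_injective

/-- Additivity of the Hirsch length on admissible factors. -/
theorem exists_ker_of_surjective (h : IsGoodFactor F b) (ψ : F →* Q)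
    (hψ : Function.Surjective ψ) :
    ∃ b₁ b₂ : Bool, IsGoodFactor ψ.ker b₁ ∧ IsGoodFactor Q b₂ ∧
      b₁.toNat + b₂.toNat = b.toNat := by
  cases b
  · exact ⟨false, false, h.subgroup_false _,
      IsLocallyFiniteGroup.of_surjective h ψ hψ, rfl⟩
  by_cases hker : ψ.ker = ⊥
  · have hbij : Function.Bijective ψ := ⟨(MonoidHom.ker_eq_bot_iff ψ).mp hker, hψ⟩
    have : Subsingleton ψ.ker := by rw [hker]; infer_instance
    exact ⟨false, true, of_subsingleton, h.of_mulEquiv (MulEquiv.ofBijective ψ hbij), rfl⟩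
  · have : Finite Q := IsInfiniteCyclic.finite_of_surjective h ψ hψ hker
    exact ⟨true, false, IsInfiniteCyclic.subgroup h _ hker, IsLocallyFiniteGroup.of_finite, rfl⟩

end IsGoodFactor

def IsGoodStep {G : Type u} [Group G] (A B : Subgroup G) (b : Bool) : Prop :=
  A ≤ B ∧ ∃ (F : Type u) (_ : Group F) (f : ↥B →* F),
    Function.Surjective f ∧ (∀ x : ↥B, f x = 1 ↔ (x : G) ∈ A) ∧ IsGoodFactor F b

def Subgroup.subgroupOfInclusion {G : Type*} [Group G] (B H : Subgroup G) :
    ↥(B.subgroupOf H) →* ↥B :=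
  (H.subtype.comp (B.subgroupOf H).subtype).codRestrict B fun x => x.2

section Step

variable {G Q : Type u} [Group G] [Group Q] {F : Type u} [Group F] {A B : Subgroup G}

theorem isGoodStep_subgroupOf (hAB : A ≤ B) (f : ↥B →* F)
    (hf : ∀ x : ↥B, f x = 1 ↔ (x : G) ∈ A) (H : Subgroup G) {b : Bool}
    (hb : IsGoodFactor ((H.subgroupOf B).map f) b) :
    IsGoodStep (A.subgroupOf H) (B.subgroupOf H) b := by
  let f' : ↥(B.subgroupOf H) →* (H.subgroupOf B).map f :=
    (f.comp (B.subgroupOfInclusion H)).codRestrict _ fun x => ⟨_, (x : H).2, rfl⟩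
  refine ⟨comap_mono hAB, _, _, f', ?_, fun x => ?_, hb⟩
  · rintro ⟨_, ⟨y, hy, rfl⟩⟩
    exact ⟨⟨⟨y, hy⟩, y.2⟩, rfl⟩
  · rw [mem_subgroupOf, Subtype.ext_iff]
    exact hf (B.subgroupOfInclusion H x)

theorem mem_map_subgroupOf_ker_iff (hAB : A ≤ B) (f : ↥B →* F)
    (hf : ∀ x : ↥B, f x = 1 ↔ (x : G) ∈ A) (π : G →* Q) (x : ↥B) :
    f x ∈ (π.ker.subgroupOf B).map f ↔ π x ∈ A.map π := by
  constructor
  · rintro ⟨w, hw, hwx⟩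
    have hwx' : f (w⁻¹ * x) = 1 := by rw [map_mul, map_inv, hwx, inv_mul_cancel]
    refine ⟨_, (hf _).mp hwx', ?_⟩
    rw [coe_mul, coe_inv, map_mul, map_inv, (mem_subgroupOf.mp hw : π w = 1), inv_one, one_mul]
  · rintro ⟨a, ha, hax⟩
    refine ⟨x * ⟨a, hAB ha⟩⁻¹, mem_subgroupOf.mpr ?_, ?_⟩
    · simp [hax]
    · rw [map_mul, map_inv, (hf ⟨a, hAB ha⟩).mpr ha, inv_one, mul_one]

theorem isGoodStep_map (hAB : A ≤ B) (f : ↥B →* F) (hf_surj : Function.Surjective f)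
    (hf : ∀ x : ↥B, f x = 1 ↔ (x : G) ∈ A) (π : G →* Q)
    [((π.ker.subgroupOf B).map f).Normal] {b : Bool}
    (hb : IsGoodFactor (F ⧸ (π.ker.subgroupOf B).map f) b) :
    IsGoodStep (A.map π) (B.map π) b := by
  set M := (π.ker.subgroupOf B).map f
  have hle : (π.subgroupMap B).ker ≤ ((QuotientGroup.mk' M).comp f).ker := by
    intro x hx
    rw [MonoidHom.mem_ker, MonoidHom.comp_apply, QuotientGroup.mk'_apply,
      QuotientGroup.eq_one_iff]
    exact ⟨x, mem_subgroupOf.mpr (congrArg Subtype.val hx), rfl⟩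
  let φ := (π.subgroupMap B).liftOfSurjective (π.subgroupMap_surjective B) ⟨_, hle⟩
  have hφ (x : ↥B) : φ (π.subgroupMap B x) = QuotientGroup.mk' M (f x) :=
    MonoidHom.liftOfRightInverse_comp_apply _ _ _ _ x
  refine ⟨map_mono hAB, _, _, φ, fun y => ?_, fun y => ?_, hb⟩
  · obtain ⟨x, rfl⟩ := (QuotientGroup.mk'_surjective M).comp hf_surj y
    exact ⟨_, hφ x⟩
  · obtain ⟨x, rfl⟩ := π.subgroupMap_surjective B y
    rw [hφ, QuotientGroup.mk'_apply, QuotientGroup.eq_one_iff,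
      mem_map_subgroupOf_ker_iff hAB f hf]
    rfl

theorem IsGoodStep.exists_subgroupOf_ker_map {b : Bool} (h : IsGoodStep A B b) (π : G →* Q) :
    ∃ b₁ b₂ : Bool, IsGoodStep (A.subgroupOf π.ker) (B.subgroupOf π.ker) b₁ ∧
      IsGoodStep (A.map π) (B.map π) b₂ ∧ b₁.toNat + b₂.toNat = b.toNat := by
  obtain ⟨hAB, F, _, f, hf_surj, hf, hF⟩ := h
  set M := (π.ker.subgroupOf B).map f
  have : M.Normal := Normal.map inferInstance f hf_surj
  obtain ⟨b₁, b₂, hb₁, hb₂, hsum⟩ :=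
    hF.exists_ker_of_surjective _ (QuotientGroup.mk'_surjective M)
  rw [QuotientGroup.ker_mk'] at hb₁
  exact ⟨b₁, b₂, isGoodStep_subgroupOf hAB f hf _ hb₁,
    isGoodStep_map hAB f hf_surj hf π hb₂, hsum⟩

theorem IsGoodStep.subgroupOf {b : Bool} (h : IsGoodStep A B b) (H : Subgroup G)
    (hcover : b = true → ∀ x ∈ B, ∃ y ∈ H, y⁻¹ * x ∈ A) :
    IsGoodStep (A.subgroupOf H) (B.subgroupOf H) b := by
  obtain ⟨hAB, F, _, f, hf_surj, hf, hF⟩ := h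
  refine isGoodStep_subgroupOf hAB f hf H ?_
  cases b
  · exact hF.subgroup_false _
  refine hF.subgroup_of_eq_top (eq_top_iff.mpr fun z _ => ?_)
  obtain ⟨x, rfl⟩ := hf_surj z
  obtain ⟨y, hyH, hyx⟩ := hcover rfl x x.2
  have hyB : y ∈ B := by simpa using B.mul_mem x.2 (B.inv_mem (hAB hyx))
  refine ⟨⟨y, hyB⟩, mem_subgroupOf.mpr hyH, ?_⟩
  rw [← inv_mul_eq_one, ← map_inv, ← map_mul]
  exact (hf _).mpr hyx

end Step

namespace IsGoodSeries

variable {G Q : Type u} [Group G] [Group Q]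

theorem isGoodStep {n : ℕ} {s : Fin (n + 1) → Subgroup G} {c : Fin n → Bool}
    (hs : IsGoodSeries s c) (i : Fin n) : IsGoodStep (s i.castSucc) (s i.succ) (c i) :=
  hs.2.2 i

theorem subsingleton {s : Fin 1 → Subgroup G} {c : Fin 0 → Bool} (hs : IsGoodSeries s c) :
    Subsingleton G :=
  Subgroup.subsingleton_iff.mp (subsingleton_of_bot_eq_top (hs.1.symm.trans hs.2.1))

theorem subgroupOf {m : ℕ} {t : Fin (m + 1) → Subgroup G} {d : Fin m → Bool}
    (ht : IsGoodSeries t d) (H : Subgroup G)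
    (hcover : ∀ i, d i = true → ∀ x ∈ t i.succ, ∃ y ∈ H, y⁻¹ * x ∈ t i.castSucc) :
    IsGoodSeries (fun j => (t j).subgroupOf H) d :=
  ⟨by simp [ht.1], by simp [ht.2.1], fun i => (ht.isGoodStep i).subgroupOf H (hcover i)⟩

theorem exists_subgroupOf_ker_map {m : ℕ} {t : Fin (m + 1) → Subgroup G} {d : Fin m → Bool}
    (ht : IsGoodSeries t d) (π : G →* Q) (hπ : Function.Surjective π) :
    ∃ dK dQ : Fin m → Bool, IsGoodSeries (fun j => (t j).subgroupOf π.ker) dK ∧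
      IsGoodSeries (fun j => (t j).map π) dQ ∧
      ∑ i, (d i).toNat = ∑ i, (dK i).toNat + ∑ i, (dQ i).toNat := by
  choose dK dQ hK hQ hsum using fun i => (ht.isGoodStep i).exists_subgroupOf_ker_map π
  refine ⟨dK, dQ, ⟨by simp [ht.1], by simp [ht.2.1], hK⟩,
    ⟨by simp [ht.1], by simp [ht.2.1, map_top_of_surjective π hπ], hQ⟩, ?_⟩
  rw [← Finset.sum_add_distrib]
  exact Finset.sum_congr rfl fun i _ => (hsum i).symm

theorem exists_surjective_ker_eq {n : ℕ} {s : Fin (n + 2) → Subgroup G}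
    {c : Fin (n + 1) → Bool} (hs : IsGoodSeries s c) :
    ∃ (F : Type u) (_ : Group F) (π : G →* F), Function.Surjective π ∧
      π.ker = s (Fin.last n).castSucc ∧ IsGoodFactor F (c (Fin.last n)) := by
  obtain ⟨-, F, _, f, hf_surj, hf, hF⟩ := hs.isGoodStep (Fin.last n)
  have htop : s (Fin.last n).succ = ⊤ := hs.2.1
  let ι : G →* s (Fin.last n).succ := (MonoidHom.id G).codRestrict _ fun x => htop ▸ mem_top x
  refine ⟨F, _, f.comp ι, hf_surj.comp fun y => ⟨y, rfl⟩, ?_, hF⟩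
  ext x
  exact hf (ι x)

theorem init {n : ℕ} {s : Fin (n + 2) → Subgroup G} {c : Fin (n + 1) → Bool}
    (hs : IsGoodSeries s c) :
    IsGoodSeries (fun j : Fin (n + 1) => (s j.castSucc).subgroupOf (s (Fin.last n).castSucc))
      (fun i => c i.castSucc) := by
  have hmono : Monotone s := Fin.monotone_iff_le_succ.mpr fun i => (hs.isGoodStep i).1
  refine ⟨by simp [hs.1], subgroupOf_self _,
    fun i => (hs.isGoodStep i.castSucc).subgroupOf _ ?_⟩
  intro _ x hx
  have hle : s i.succ.castSucc ≤ s (Fin.last n).castSucc :=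
    hmono (Fin.castSucc_le_castSucc_iff.mpr (Fin.le_last _))
  exact ⟨x, hle hx, by simp⟩

theorem sum_toNat_eq_of_isGoodFactor {m : ℕ} {K : Type u} [Group K]
    {t : Fin (m + 1) → Subgroup K} {d : Fin m → Bool} (ht : IsGoodSeries t d) {b : Bool}
    (hb : IsGoodFactor K b) : ∑ i, (d i).toNat = b.toNat := by
  induction m generalizing K b with
  | zero =>
    have := ht.subsingleton
    simp [hb.eq IsGoodFactor.of_subsingleton]
  | succ m ih =>
    obtain ⟨F, _, π, hπ, hker, hF⟩ := ht.exists_surjective_ker_eq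
    obtain ⟨b₁, b₂, hb₁, hb₂, hsum⟩ := hb.exists_ker_of_surjective π hπ
    rw [hker] at hb₁
    rw [Fin.sum_univ_castSucc, ih ht.init hb₁, hF.eq hb₂, hsum]

theorem sum_toNat_eq {n : ℕ} {s : Fin (n + 1) → Subgroup G}
    {c : Fin n → Bool} (hs : IsGoodSeries s c) {m : ℕ} {t : Fin (m + 1) → Subgroup G}
    {d : Fin m → Bool} (ht : IsGoodSeries t d) : ∑ i, (c i).toNat = ∑ i, (d i).toNat := by
  induction n generalizing G m with
  | zero =>
    have := hs.subsingleton
    simp [ht.sum_toNat_eq_of_isGoodFactor IsGoodFactor.of_subsingleton]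
  | succ n ih =>
    obtain ⟨F, _, π, hπ, hker, hF⟩ := hs.exists_surjective_ker_eq
    obtain ⟨dK, dQ, hK, hQ, hsum⟩ := ht.exists_subgroupOf_ker_map π hπ
    rw [hker] at hK
    rw [Fin.sum_univ_castSucc, hsum, ih hs.init hK, hQ.sum_toNat_eq_of_isGoodFactor hF]

theorem hirschLength_eq {n : ℕ} {s : Fin (n + 1) → Subgroup G}
    {c : Fin n → Bool} (hs : IsGoodSeries s c) :
    hirschLength G = ((Finset.univ.filter fun i => c i = true).card : ℕ∞) := by
  have hcard {m : ℕ} (d : Fin m → Bool) :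
      (Finset.univ.filter fun i => d i = true).card = ∑ i, (d i).toNat := by
    rw [Finset.card_filter]
    exact Finset.sum_congr rfl fun i _ => by cases d i <;> rfl
  refine IsLeast.csInf_eq ⟨⟨n, s, c, hs, rfl⟩, ?_⟩
  rintro _ ⟨m, t, d, ht, rfl⟩
  rw [hcard, hcard, hs.sum_toNat_eq ht]

end IsGoodSeries

theorem stmt9_general {G : Type u} [Group G] {n : ℕ}
    (s : Fin (n + 1) → Subgroup G) (c : Fin n → Bool) (hgood : IsGoodSeries s c)
    (g : Fin n → G)
    (hgen : ∀ i : Fin n, c i = true →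
      ∀ x ∈ s i.succ, ∃ k : ℤ, (g i ^ k)⁻¹ * x ∈ s i.castSucc) :
    (Subgroup.closure {x : G | ∃ i : Fin n, c i = true ∧ g i = x}).FG ∧
      hirschLength ↥(Subgroup.closure {x : G | ∃ i : Fin n, c i = true ∧ g i = x}) =
        hirschLength G := by
  set H := Subgroup.closure {x : G | ∃ i : Fin n, c i = true ∧ g i = x}
  refine ⟨(Subgroup.fg_iff H).mpr ⟨_, rfl, (Set.finite_range g).subset ?_⟩, ?_⟩
  · rintro _ ⟨i, -, rfl⟩
    exact ⟨i, rfl⟩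
  have hH : IsGoodSeries (fun j => (s j).subgroupOf H) c := by
    refine hgood.subgroupOf H fun i hi x hx => ?_
    obtain ⟨k, hk⟩ := hgen i hi x hx
    have hgH : g i ∈ H := Subgroup.subset_closure ⟨i, hi, rfl⟩
    exact ⟨g i ^ k, zpow_mem hgH k, hk⟩
  rw [hH.hirschLength_eq, hgood.hirschLength_eq]

/-- Given an elementary amenable group `G` with a subnormal series whose factors are
infinite cyclic or locally finite, and generators `g i` of the infinite cyclic factors
modulo the previous term, the subgroup generated by the `g i` is finitely generated of
the same Hirsch length as `G`. -/
theorem stmt9 {G : Type u} [Group G] (hEA : ElementaryAmenable G) {n : ℕ}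
    (s : Fin (n + 1) → Subgroup G) (c : Fin n → Bool) (hgood : IsGoodSeries s c)
    (g : Fin n → G)
    (hmem : ∀ i : Fin n, c i = true → g i ∈ s i.succ)
    (hgen : ∀ i : Fin n, c i = true →
      ∀ x ∈ s i.succ, ∃ k : ℤ, (g i ^ k)⁻¹ * x ∈ s i.castSucc) :
    (Subgroup.closure {x : G | ∃ i : Fin n, c i = true ∧ g i = x}).FG ∧
      hirschLength ↥(Subgroup.closure {x : G | ∃ i : Fin n, c i = true ∧ g i = x}) =
        hirschLength G :=
  stmt9_general s c hgood g hgen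
end

section
/- Let N be a nilpotent group, α an endomorphism of N inducing an integral endomorphism on N_ab, and let H be a subgroup of N with α(H) ⊆ H. Then the restriction of α to H induces an integral endomorphism on H_ab. -/
/-- An endomorphism of an abelian group (written multiplicatively) is integral if it
satisfies a monic integer polynomial in the endomorphism ring. -/
def IsIntegralMulEnd {A : Type*} [CommGroup A] (f : A →* A) : Prop :=
  IsIntegral ℤ (show AddMonoid.End (Additive A) from MonoidHom.toAdditive f)

/-!
Write `r(α)` for `x ↦ ∏ⱼ (αʲ x) ^ rⱼ` and `γᵢ` for the lower central series, `γ₀ = N`.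
Suppose `p(α)` maps `N` into `γ₁` and `q(α)` maps `γᵢ` into `γᵢ₊₁`. Modulo `γᵢ₊₂` the commutator
`γᵢ × N → γᵢ₊₁` is biadditive with central values, intertwines `α × α` with `α`, and vanishes on
`γᵢ × γ₁` by the three subgroups lemma. Hence if `Q` is monic with `Q(XY) ∈ (p(X), q(Y))`, i.e. its
roots are the products of a root of `p` and a root of `q`, then `Q(α)` maps `γᵢ₊₁` into `γᵢ₊₂`.
As `N` is nilpotent, the product of the polynomials so obtained for all layers pushes `H` down the
filtration `H ∩ γᵢ` to `1`, so it annihilates `H_ab`.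
-/

open Polynomial Finset

theorem Polynomial.exists_monic_aeval_mul_mem_span {R S : Type*} [CommRing R] [CommRing S]
    [Algebra R S] {p q : R[X]} (hp : p.Monic) (hq : q.Monic) (x y : S) :
    ∃ Q : R[X], Q.Monic ∧ aeval (x * y) Q ∈ Ideal.span {aeval x p, aeval y q} := by
  set I := Ideal.span {aeval x p, aeval y q}
  have isIntegral_mk {z : S} {r : R[X]} (hr : r.Monic) (hz : aeval z r ∈ I) :
      IsIntegral R (Ideal.Quotient.mkₐ R I z) :=
    ⟨r, hr, by rw [← aeval_def, aeval_algHom_apply]; exact Ideal.Quotient.eq_zero_iff_mem.mpr hz⟩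
  obtain ⟨Q, hQ, hQ0⟩ := (isIntegral_mk hp (Ideal.subset_span (Set.mem_insert _ _))).mul
    (isIntegral_mk hq (Ideal.subset_span (Set.mem_insert_of_mem _ rfl)))
  rw [← map_mul, ← aeval_def, aeval_algHom_apply] at hQ0
  exact ⟨Q, hQ, Ideal.Quotient.eq_zero_iff_mem.mp hQ0⟩

theorem Commute.exists_monic_aeval_mul_eq {R E : Type*} [CommRing R] [Ring E] [Algebra R E]
    {S T : E} (h : Commute S T) {p q : R[X]} (hp : p.Monic) (hq : q.Monic) :
    ∃ Q : R[X], Q.Monic ∧ ∃ u w : E, aeval (S * T) Q = u * aeval S p + w * aeval T q := by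
  have hST (a : R[X]) : Commute (aeval S a) T := by
    rw [aeval_eq_sum_range]
    exact Commute.sum_left _ _ _ fun i _ => (h.pow_left i).smul_left _
  let ψ : R[X][X] →ₐ[R] E := eval₂AlgHom (aeval S) T hST
  have hψC : ψ (C X) = S := (eval₂_C _ _).trans (aeval_X S)
  have hψX : ψ X = T := eval₂_X _ _
  obtain ⟨Q, hQ, hmem⟩ := exists_monic_aeval_mul_mem_span hp hq (C X : R[X][X]) X
  obtain ⟨u, w, huw⟩ := Ideal.mem_span_pair.mp hmem
  refine ⟨Q, hQ, ψ u, ψ w, ?_⟩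
  rw [← hψC, ← hψX, ← map_mul, aeval_algHom_apply ψ, aeval_algHom_apply ψ, aeval_algHom_apply ψ,
    ← huw, map_add, map_mul, map_mul]

theorem Polynomial.aeval_funLeft_apply {R W ι : Type*} [CommSemiring R] [AddCommMonoid W]
    [Module R W] (e : ι → ι) (r : R[X]) (m : ι → W) (z : ι) :
    aeval (LinearMap.funLeft R W e) r m z =
      ∑ k ∈ range (r.natDegree + 1), r.coeff k • m (e^[k] z) := by
  have hpow (k : ℕ) : LinearMap.funLeft R W e ^ k = LinearMap.funLeft R W e^[k] := by
    induction k with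
    | zero => rfl
    | succ k ih => rw [pow_succ', ih, Function.iterate_succ, LinearMap.funLeft_comp]; rfl
  simp [aeval_eq_sum_range, hpow, LinearMap.funLeft_apply]

theorem Polynomial.exists_monic_sum_diag_eq_zero {R W : Type*} [CommRing R] [AddCommGroup W]
    [Module R W] {p q : R[X]} (hp : p.Monic) (hq : q.Monic) :
    ∃ Q : R[X], Q.Monic ∧ ∀ c : ℕ × ℕ → W,
      (∀ a b, ∑ k ∈ range (p.natDegree + 1), p.coeff k • c (a + k, b) = 0) →
      (∀ a b, ∑ k ∈ range (q.natDegree + 1), q.coeff k • c (a, b + k) = 0) →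
      ∑ k ∈ range (Q.natDegree + 1), Q.coeff k • c (k, k) = 0 := by
  -- `S` and `T` shift the two coordinates: the hypotheses say `aeval S p c = 0 = aeval T q c`.
  let S := LinearMap.funLeft R W (Prod.map Nat.succ (id : ℕ → ℕ))
  let T := LinearMap.funLeft R W (Prod.map (id : ℕ → ℕ) Nat.succ)
  have hST : S * T = LinearMap.funLeft R W (Prod.map Nat.succ Nat.succ) := rfl
  have hcomm : Commute S T := LinearMap.ext fun _ => rfl
  obtain ⟨Q, hQ, u, w, hQuw⟩ := hcomm.exists_monic_aeval_mul_eq hp hq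
  refine ⟨Q, hQ, fun c hpc hqc => ?_⟩
  have hSc : aeval S p c = 0 := by
    ext ⟨a, b⟩
    simpa [S, aeval_funLeft_apply, Prod.map_iterate, Nat.succ_iterate] using hpc a b
  have hTc : aeval T q c = 0 := by
    ext ⟨a, b⟩
    simpa [T, aeval_funLeft_apply, Prod.map_iterate, Nat.succ_iterate] using hqc a b
  have hQc := congrFun (congrArg (· c) hQuw) (0, 0)
  simpa [hSc, hTc, hST, aeval_funLeft_apply, Prod.map_iterate, Nat.succ_iterate] using hQc

section PolyProd

variable {G : Type*} [Group G]

/-- `r(f) x = ∏ⱼ (f^[j] x) ^ rⱼ`, the factors taken in increasing order of `j`. Only in abelian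
groups is this `aeval` (see `ofMul_polyProd`), and only there is it multiplicative in `r`. -/
def polyProd (f : G →* G) (r : ℤ[X]) (x : G) : G :=
  (List.ofFn fun j : Fin (r.natDegree + 1) => (f^[j] x) ^ r.coeff j).prod

@[simp]
theorem polyProd_one (f : G →* G) (x : G) : polyProd f 1 x = x := by
  simp [polyProd, Fin.val_cast]

theorem Function.Semiconj.map_polyProd {G' : Type*} [Group G'] {σ : G →* G'} {f : G →* G}
    {g : G' →* G'} (h : Function.Semiconj σ f g) (r : ℤ[X]) (x : G) :
    σ (polyProd f r x) = polyProd g r (σ x) := by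
  simp only [polyProd, map_list_prod, List.map_ofFn, Function.comp_def, map_zpow,
    h.iterate_right _ x]

theorem ofMul_map_polyProd {A : Type*} [CommGroup A] (χ : G →* A) (f : G →* G) (r : ℤ[X]) (x : G) :
    Additive.ofMul (χ (polyProd f r x)) =
      ∑ k ∈ range (r.natDegree + 1), r.coeff k • Additive.ofMul (χ (f^[k] x)) := by
  rw [polyProd, map_list_prod, List.map_ofFn, List.prod_ofFn, ofMul_prod,
    ← Fin.sum_univ_eq_sum_range]
  simp [ofMul_zpow]

theorem map_polyProd_mul {A : Type*} [CommGroup A] (χ : G →* A) (f : G →* G) (r : ℤ[X]) (x y : G) :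
    χ (polyProd f r (x * y)) = χ (polyProd f r x) * χ (polyProd f r y) := by
  apply Additive.ofMul.injective
  simp only [ofMul_mul, ofMul_map_polyProd, ← sum_add_distrib, iterate_map_mul, map_mul, smul_add]

theorem ofMul_polyProd {A : Type*} [CommGroup A] {f : A →* A} {T : AddMonoid.End (Additive A)}
    (hT : ∀ x, T (Additive.ofMul x) = Additive.ofMul (f x)) (r : ℤ[X]) (x : A) :
    Additive.ofMul (polyProd f r x) = aeval T r (Additive.ofMul x) := by
  have hTk (k : ℕ) : (T ^ k) (Additive.ofMul x) = Additive.ofMul (f^[k] x) := by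
    rw [AddMonoid.End.coe_pow]
    exact (Function.Semiconj.iterate_right (f := Additive.ofMul) (fun y => (hT y).symm) k x).symm
  rw [← MonoidHom.id_apply A (polyProd f r x), ofMul_map_polyProd, aeval_eq_sum_range]
  refine (sum_congr rfl fun k _ => ?_).trans (AddMonoidHom.finsetSum_apply _ _ _).symm
  change _ = r.coeff k • (T ^ k) (Additive.ofMul x)
  rw [hTk]
  rfl

theorem polyProd_mul {A : Type*} [CommGroup A] (f : A →* A) (q r : ℤ[X]) (x : A) :
    polyProd f (q * r) x = polyProd f q (polyProd f r x) := by
  let T : AddMonoid.End (Additive A) := MonoidHom.toAdditive f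
  have hT : ∀ x, T (Additive.ofMul x) = Additive.ofMul (f x) := fun _ => rfl
  apply Additive.ofMul.injective
  rw [ofMul_polyProd hT, ofMul_polyProd hT, ofMul_polyProd hT, map_mul]
  rfl

theorem isIntegralMulEnd_iff {A : Type*} [CommGroup A] (f : A →* A) :
    IsIntegralMulEnd f ↔ ∃ q : ℤ[X], q.Monic ∧ ∀ x, polyProd f q x = 1 := by
  let T : AddMonoid.End (Additive A) := MonoidHom.toAdditive f
  have hT : ∀ x, T (Additive.ofMul x) = Additive.ofMul (f x) := fun _ => rfl
  refine exists_congr fun q => and_congr_right fun _ => ?_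
  change aeval T q = 0 ↔ _
  rw [DFunLike.ext_iff]
  refine (Additive.ofMul.surjective.forall).trans (forall_congr' fun x => ?_)
  rw [← ofMul_polyProd hT]
  exact ofMul_eq_zero

theorem isIntegralMulEnd_of_mapsTo {A : Type*} [CommGroup A] (f : A →* A) (F : ℕ → Set A)
    (hF : ∀ i, ∃ q : ℤ[X], q.Monic ∧ Set.MapsTo (polyProd f q) (F i) (F (i + 1))) {n : ℕ}
    (h0 : F 0 = Set.univ) (hn : F n ⊆ {1}) : IsIntegralMulEnd f := by
  choose q hq hqF using hF
  have hchain (m : ℕ) : Set.MapsTo (polyProd f (∏ i ∈ range m, q i)) (F 0) (F m) := by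
    induction m with
    | zero => exact fun x hx => by rwa [prod_range_zero, polyProd_one]
    | succ m ih =>
      rw [prod_range_succ_comm]
      exact fun x hx => by rw [polyProd_mul]; exact hqF m (ih hx)
  refine (isIntegralMulEnd_iff f).mpr
    ⟨∏ i ∈ range n, q i, monic_prod_of_monic _ _ fun i _ => hq i, fun x => ?_⟩
  exact hn (hchain n (h0 ▸ Set.mem_univ x))

end PolyProd

section Commutator

open Subgroup
open scoped IsMulCommutative commutatorElement

variable {G : Type*} [Group G]

def commutatorLeftHom {v : G} (hv : ∀ t, ⁅v, t⁆ ∈ center G) : G →* center G where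
  toFun t := ⟨⁅v, t⁆, hv t⟩
  map_one' := Subtype.ext (commutatorElement_one_right v)
  map_mul' t t' := Subtype.ext <| calc
    ⁅v, t * t'⁆ = ⁅v, t⁆ * (t * ⁅v, t'⁆ * t⁻¹) := by group
    _ = ⁅v, t⁆ * ⁅v, t'⁆ := by rw [mem_center_iff.mp (hv t') t, mul_inv_cancel_right]

def commutatorRightHom {V : Subgroup G} (hV : ∀ v ∈ V, ∀ t, ⁅v, t⁆ ∈ center G) (t : G) :
    V →* center G where
  toFun v := ⟨⁅(v : G), t⁆, hV v v.2 t⟩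
  map_one' := Subtype.ext (commutatorElement_one_left t)
  map_mul' v v' := Subtype.ext <| calc
    ⁅(v : G) * v', t⁆ = (v * ⁅(v' : G), t⁆ * (v : G)⁻¹) * ⁅(v : G), t⁆ := by group
    _ = ⁅(v : G), t⁆ * ⁅(v' : G), t⁆ := by
      rw [mem_center_iff.mp (hV v' v'.2 t) v, mul_inv_cancel_right,
        mem_center_iff.mp (hV v' v'.2 t)]

theorem commutator_commutator_eq_bot_of_commutator_le_center {V : Subgroup G}
    (hV : ⁅V, ⊤⁆ ≤ center G) : ⁅V, commutator G⁆ = ⊥ := by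
  have h : ⁅⁅V, ⊤⁆, ⊤⁆ = ⊥ := commutator_top_right_eq_bot_iff_le_center.mpr hV
  rw [commutator_comm, commutator_def]
  -- the three subgroups lemma
  exact commutator_commutator_eq_bot_of_rotate (by rwa [commutator_comm (⊤ : Subgroup G) V]) h

theorem map_mem_commutator_top {β : G →* G} {V : Subgroup G} (hβV : ∀ v ∈ V, β v ∈ V) {z : G}
    (hz : z ∈ (⁅V, ⊤⁆ : Subgroup G)) : β z ∈ (⁅V, ⊤⁆ : Subgroup G) := by
  have : (⁅V, ⊤⁆ : Subgroup G).map β ≤ ⁅V, ⊤⁆ := by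
    rw [map_commutator]
    exact commutator_mono (map_le_iff_le_comap.mpr hβV) le_top
  exact this (mem_map_of_mem β hz)

theorem polyProd_eq_one_of_commutator_le_center {β : G →* G} {V : Subgroup G}
    (hβV : ∀ v ∈ V, β v ∈ V) (hV : ⁅V, ⊤⁆ ≤ center G) {Q : ℤ[X]}
    (hQ : ∀ v ∈ V, ∀ t, polyProd β Q ⁅v, t⁆ = 1) {z : G} (hz : z ∈ (⁅V, ⊤⁆ : Subgroup G)) :
    polyProd β Q z = 1 := by
  set Z : Subgroup G := ⁅V, ⊤⁆
  let βZ : Z →* Z := (β.domRestrict Z).codRestrict Z fun z => map_mem_commutator_top hβV z.2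
  have hsemi : Function.Semiconj Z.subtype βZ β := fun _ => rfl
  let E : Z →* center G := MonoidHom.mk' (fun w => inclusion hV (polyProd βZ Q w))
    (map_polyProd_mul (inclusion hV) βZ Q)
  suffices hZE : Z ≤ E.ker.map Z.subtype by
    obtain ⟨w, hw, rfl⟩ := hZE hz
    rw [← hsemi.map_polyProd]
    exact congrArg Subtype.val (MonoidHom.mem_ker.mp hw)
  refine commutator_le.mpr fun v hv t _ =>
    ⟨⟨⁅v, t⁆, commutator_mem_commutator hv (mem_top t)⟩, ?_, rfl⟩
  exact MonoidHom.mem_ker.mpr (Subtype.ext ((hsemi.map_polyProd Q _).trans (hQ v hv t)))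

theorem exists_monic_polyProd_commutatorElement_eq_one (β : G →* G) {V : Subgroup G}
    (hβV : ∀ v ∈ V, β v ∈ V) (hV : ⁅V, ⊤⁆ ≤ center G) {p q : ℤ[X]} (hp : p.Monic)
    (hq : q.Monic) (hpβ : ∀ t, polyProd β p t ∈ commutator G)
    (hqβ : ∀ v ∈ V, polyProd β q v ∈ center G) :
    ∃ Q : ℤ[X], Q.Monic ∧ ∀ v ∈ V, ∀ t, polyProd β Q ⁅v, t⁆ = 1 := by
  have hVt : ∀ v ∈ V, ∀ t, ⁅v, t⁆ ∈ center G := fun v hv t =>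
    hV (commutator_mem_commutator hv (mem_top t))
  set Z : Subgroup G := ⁅V, ⊤⁆
  let βV : V →* V := (β.domRestrict V).codRestrict V fun v => hβV v v.2
  let βZ : Z →* Z := (β.domRestrict Z).codRestrict Z fun z => map_mem_commutator_top hβV z.2
  have hsemiV : Function.Semiconj V.subtype βV β := fun _ => rfl
  have hsemiZ : Function.Semiconj Z.subtype βZ β := fun _ => rfl
  obtain ⟨Q, hQ, hQc⟩ := exists_monic_sum_diag_eq_zero (W := Additive (center G)) hp hq
  refine ⟨Q, hQ, fun v hv t => ?_⟩
  let v₀ : V := ⟨v, hv⟩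
  let c : ℕ × ℕ → Additive (center G) := fun ab =>
    Additive.ofMul (commutatorRightHom hVt (β^[ab.1] t) (βV^[ab.2] v₀))
  have hpc (a b : ℕ) : ∑ k ∈ range (p.natDegree + 1), p.coeff k • c (a + k, b) = 0 := by
    have hc (k : ℕ) : c (a + k, b) =
        Additive.ofMul (commutatorLeftHom (hVt _ (βV^[b] v₀).2) (β^[k] (β^[a] t))) := by
      rw [← Function.iterate_add_apply, add_comm]
      rfl
    simp only [hc, ← ofMul_map_polyProd, ofMul_eq_zero]
    refine Subtype.ext (?_ : ⁅((βV^[b] v₀ : V) : G), polyProd β p (β^[a] t)⁆ = 1)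
    rw [← mem_bot, ← commutator_commutator_eq_bot_of_commutator_le_center hV]
    exact commutator_mem_commutator (βV^[b] v₀).2 (hpβ _)
  have hqc (a b : ℕ) : ∑ k ∈ range (q.natDegree + 1), q.coeff k • c (a, b + k) = 0 := by
    have hc (k : ℕ) : c (a, b + k) =
        Additive.ofMul (commutatorRightHom hVt (β^[a] t) (βV^[k] (βV^[b] v₀))) := by
      rw [← Function.iterate_add_apply, add_comm]
    simp only [hc, ← ofMul_map_polyProd, ofMul_eq_zero]
    have hcent : V.subtype (polyProd βV q (βV^[b] v₀)) ∈ center G := by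
      rw [hsemiV.map_polyProd]
      exact hqβ _ (βV^[b] v₀).2
    exact Subtype.ext (commutatorElement_eq_one_iff_mul_comm.mpr (mem_center_iff.mp hcent _).symm)
  let w₀ : Z := ⟨⁅v, t⁆, commutator_mem_commutator hv (mem_top t)⟩
  have hdiag (k : ℕ) : c (k, k) = Additive.ofMul (inclusion hV (βZ^[k] w₀)) := by
    refine congrArg Additive.ofMul (Subtype.ext ?_)
    show ⁅V.subtype (βV^[k] v₀), β^[k] t⁆ = Z.subtype (βZ^[k] w₀)
    rw [hsemiV.iterate_right, hsemiZ.iterate_right]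
    exact ((Function.Semiconj₂.iterate (op := fun a b : G => ⁅a, b⁆)
      (map_commutatorElement β) k).eq v t).symm
  have hQw₀ := hQc c hpc hqc
  simp only [hdiag, ← ofMul_map_polyProd, ofMul_eq_zero] at hQw₀
  exact (hsemiZ.map_polyProd Q w₀).symm.trans (congrArg Subtype.val hQw₀)

end Commutator

section LowerCentralSeries

open Subgroup

variable {N : Type*} [Group N]

theorem map_top_lowerCentralSeries_le {K : Type*} [Group K] (f : N →* K) (n : ℕ) :
    ((⊤ : Subgroup N).lowerCentralSeries n).map f ≤ (⊤ : Subgroup K).lowerCentralSeries n := by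
  rw [map_lowerCentralSeries]
  exact lowerCentralSeries_mono n le_top

theorem exists_monic_polyProd_mem_commutator {α : N →* N}
    (h : IsIntegralMulEnd (Abelianization.map α)) :
    ∃ p : ℤ[X], p.Monic ∧ ∀ g, polyProd α p g ∈ commutator N := by
  obtain ⟨p, hp, hp1⟩ := (isIntegralMulEnd_iff _).mp h
  have hsemi : Function.Semiconj Abelianization.of α (Abelianization.map α) :=
    fun g => (Abelianization.map_of α g).symm
  refine ⟨p, hp, fun g => (QuotientGroup.eq_one_iff _).mp ?_⟩
  exact (hsemi.map_polyProd p g).trans (hp1 _)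

theorem exists_monic_polyProd_mem_lowerCentralSeries_succ (α : N →* N) {p q : ℤ[X]}
    (hp : p.Monic) (hpα : ∀ g, polyProd α p g ∈ commutator N) (hq : q.Monic) {i : ℕ}
    (hqα : ∀ g ∈ (⊤ : Subgroup N).lowerCentralSeries i,
      polyProd α q g ∈ (⊤ : Subgroup N).lowerCentralSeries (i + 1)) :
    ∃ Q : ℤ[X], Q.Monic ∧ ∀ g ∈ (⊤ : Subgroup N).lowerCentralSeries (i + 1),
      polyProd α Q g ∈ (⊤ : Subgroup N).lowerCentralSeries (i + 2) := by
  set γ := (⊤ : Subgroup N).lowerCentralSeries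
  let π := QuotientGroup.mk' (γ (i + 2))
  have hπ : Function.Surjective π := QuotientGroup.mk'_surjective _
  have hαγ (n : ℕ) : ∀ g ∈ γ n, α g ∈ γ n := fun g hg =>
    map_top_lowerCentralSeries_le α n (mem_map_of_mem α hg)
  let β := QuotientGroup.map (γ (i + 2)) (γ (i + 2)) α (hαγ (i + 2))
  have hsemi : Function.Semiconj π α β := fun _ => rfl
  have hγπ (n : ℕ) : ⁅(γ n).map π, ⊤⁆ = (γ (n + 1)).map π := by
    show _ = map π ⁅γ n, ⊤⁆
    rw [map_commutator, map_top_of_surjective π hπ]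
  have hcenter : ⁅(γ i).map π, ⊤⁆ ≤ center (N ⧸ γ (i + 2)) := by
    rw [← commutator_top_right_eq_bot_iff_le_center, hγπ, hγπ, Subgroup.map_eq_bot_iff,
      QuotientGroup.ker_mk']
  have hcomm : (γ 1).map π = commutator (N ⧸ γ (i + 2)) := by
    rw [← hγπ 0]
    show ⁅map π ⊤, ⊤⁆ = _
    rw [map_top_of_surjective π hπ]
    rfl
  have hβV : ∀ v ∈ (γ i).map π, β v ∈ (γ i).map π := by
    rintro _ ⟨g, hg, rfl⟩
    exact ⟨α g, hαγ i g hg, rfl⟩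
  have hpβ : ∀ t, polyProd β p t ∈ commutator (N ⧸ γ (i + 2)) := by
    intro t
    obtain ⟨g, rfl⟩ := hπ t
    rw [← hsemi.map_polyProd, ← hcomm]
    exact mem_map_of_mem π (hpα g)
  have hqβ : ∀ v ∈ (γ i).map π, polyProd β q v ∈ center (N ⧸ γ (i + 2)) := by
    rintro _ ⟨g, hg, rfl⟩
    rw [← hsemi.map_polyProd]
    exact hcenter (hγπ i ▸ mem_map_of_mem π (hqα g hg))
  obtain ⟨Q, hQ, hQV⟩ :=
    exists_monic_polyProd_commutatorElement_eq_one β hβV hcenter hp hq hpβ hqβ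
  refine ⟨Q, hQ, fun g hg => (QuotientGroup.eq_one_iff _).mp ?_⟩
  rw [← QuotientGroup.mk'_apply, hsemi.map_polyProd]
  exact polyProd_eq_one_of_commutator_le_center hβV hcenter hQV (hγπ i ▸ mem_map_of_mem π hg)

theorem exists_monic_polyProd_mem_lowerCentralSeries (α : N →* N) {p : ℤ[X]} (hp : p.Monic)
    (hpα : ∀ g, polyProd α p g ∈ commutator N) (i : ℕ) :
    ∃ q : ℤ[X], q.Monic ∧ ∀ g ∈ (⊤ : Subgroup N).lowerCentralSeries i,
      polyProd α q g ∈ (⊤ : Subgroup N).lowerCentralSeries (i + 1) := by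
  induction i with
  | zero => exact ⟨p, hp, fun g _ => hpα g⟩
  | succ i ih =>
    obtain ⟨q, hq, hqα⟩ := ih
    exact exists_monic_polyProd_mem_lowerCentralSeries_succ α hp hpα hq hqα

end LowerCentralSeries

/-- If `α` is an endomorphism of a nilpotent group `N` inducing an integral endomorphism
on `N_ab`, and `H ≤ N` satisfies `α(H) ⊆ H`, then the restriction of `α` to `H` induces
an integral endomorphism on `H_ab`. -/
theorem stmt18 {N : Type*} [Group N] [Group.IsNilpotent N] (α : N →* N)
    (hint : IsIntegralMulEnd (Abelianization.map α))
    (H : Subgroup N) (hH : ∀ g ∈ H, α g ∈ H) :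
    IsIntegralMulEnd (Abelianization.map
      (MonoidHom.codRestrict (α.domRestrict H) H (fun x => hH x.1 x.2))) := by
  set β := MonoidHom.codRestrict (α.domRestrict H) H (fun x => hH x.1 x.2)
  obtain ⟨p, hp, hpα⟩ := exists_monic_polyProd_mem_commutator hint
  obtain ⟨c, hc⟩ := Subgroup.nilpotent_iff_lowerCentralSeries.mp ‹Group.IsNilpotent N›
  have hsemiH : Function.Semiconj H.subtype β α := fun _ => rfl
  have hsemiAb : Function.Semiconj Abelianization.of β (Abelianization.map β) :=
    fun h => (Abelianization.map_of β h).symm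
  refine isIntegralMulEnd_of_mapsTo _
    (fun i => Abelianization.of '' {h : H | (h : N) ∈ (⊤ : Subgroup N).lowerCentralSeries i})
    (fun i => ?_) (n := c) ?_ ?_
  · obtain ⟨q, hq, hqα⟩ := exists_monic_polyProd_mem_lowerCentralSeries α hp hpα i
    refine ⟨q, hq, ?_⟩
    rintro _ ⟨h, hh, rfl⟩
    refine ⟨polyProd β q h, ?_, hsemiAb.map_polyProd q h⟩
    show H.subtype (polyProd β q h) ∈ (⊤ : Subgroup N).lowerCentralSeries (i + 1)
    rw [hsemiH.map_polyProd]
    exact hqα _ hh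
  · exact Set.eq_univ_of_forall fun x => QuotientGroup.induction_on x fun h => ⟨h, Subgroup.mem_top _, rfl⟩
  · rintro _ ⟨h, hh, rfl⟩
    rw [Set.mem_ofPred_eq, hc, Subgroup.mem_bot] at hh
    rw [show h = 1 from Subtype.ext hh, map_one]
    rfl
end
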